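/- arXiv:math/0612380 — 4 statements merged into one kernel-verified Lean document; each statement's English description precedes it below -/
import Mathlib

section
/- For every integer k ≥ 1 and every prime p, p divides the denominator of the Bernoulli number B_{2k} (written in lowest terms) if and only if (p-1) divides 2k. -/
open Finset


lemma VSC_den_dvd_iff_one_lt_padicNorm {p : ℕ} [hp : Fact p.Prime] (q : ℚ) :
    p ∣ q.den ↔ 1 < padicNorm p q := by
  have hp1 : 1 < p := hp.out.one_lt
  rcases eq_or_ne q 0 with rfl | hq
  · simp [padicNorm.zero, Nat.Prime.ne_one hp.out]
  · rw [padicNorm.eq_zpow_of_nonzero hq]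
    have h1 : (1 : ℚ) = (p : ℚ) ^ (0 : ℤ) := by simp
    rw [h1, zpow_lt_zpow_iff_right₀ (by exact_mod_cast hp1), neg_pos, padicValRat_def]
    constructor
    · intro hd
      have hnum : ¬ (p : ℤ) ∣ q.num := by
        intro hc
        have h4 : p ∣ q.num.natAbs := Int.natCast_dvd_natCast.mp (by rwa [Int.dvd_natAbs])
        have h5 := Nat.dvd_gcd h4 hd
        rw [q.reduced] at h5
        exact hp.out.ne_one (Nat.eq_one_of_dvd_one h5)
      have h2 : padicValInt p q.num = 0 := padicValInt.eq_zero_of_not_dvd hnum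
      have h3 : 1 ≤ padicValNat p q.den := one_le_padicValNat_of_dvd q.den_pos.ne' hd
      omega
    · intro hv
      by_contra hd
      have h3 : padicValNat p q.den = 0 := padicValNat.eq_zero_of_not_dvd hd
      omega


lemma VSC_two_pow_ge (v : ℕ) (hv : 2 ≤ v) : v + 2 ≤ 2 ^ v := by
  induction v with
  | zero => omega
  | succ n ih =>
    rcases Nat.lt_or_ge n 2 with h | h
    · interval_cases n
      · omega
      · norm_num
    · have := ih h
      rw [pow_succ]
      omega

lemma VSC_padicValNat_lt {p : ℕ} [hp : Fact p.Prime] {j : ℕ} (hj : 1 ≤ j) :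
    padicValNat p j < j := by
  have h2 : p ^ padicValNat p j ≤ j := Nat.le_of_dvd hj pow_padicValNat_dvd
  have h3 : 2 ^ padicValNat p j ≤ p ^ padicValNat p j :=
    Nat.pow_le_pow_left hp.out.two_le _
  have h4 : padicValNat p j < 2 ^ padicValNat p j := Nat.lt_two_pow_self
  omega

lemma VSC_padicValNat_add_two_le {p : ℕ} [hp : Fact p.Prime] {j : ℕ} (hj : 3 ≤ j) :
    padicValNat p j + 2 ≤ j := by
  rcases Nat.lt_or_ge (padicValNat p j) 2 with h | h
  · omega
  · have h2 : p ^ padicValNat p j ≤ j := Nat.le_of_dvd (by omega) pow_padicValNat_dvd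
    have h3 : 2 ^ padicValNat p j ≤ p ^ padicValNat p j :=
      Nat.pow_le_pow_left hp.out.two_le _
    have := VSC_two_pow_ge _ h
    omega

lemma VSC_padicNorm_pow_div {p : ℕ} [hp : Fact p.Prime] {j : ℕ} (hj : 1 ≤ j) :
    padicNorm p ((p : ℚ) ^ j / (j : ℚ)) = (p : ℚ) ^ ((padicValNat p j : ℤ) - j) := by
  have hp0 : (p : ℚ) ≠ 0 := Nat.cast_ne_zero.mpr hp.out.ne_zero
  have hj0 : (j : ℚ) ≠ 0 := Nat.cast_ne_zero.mpr (by omega)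
  rw [padicNorm.div, padicNorm.eq_zpow_of_nonzero (pow_ne_zero _ hp0),
    padicNorm.eq_zpow_of_nonzero hj0]
  have e1 : padicValRat p ((p : ℚ) ^ j) = j := by
    rw [show ((p : ℚ) ^ j) = ((p ^ j : ℕ) : ℚ) by push_cast; ring,
      padicValRat.of_nat, padicValNat.prime_pow]
  have e2 : padicValRat p ((j : ℕ) : ℚ) = padicValNat p j := padicValRat.of_nat
  rw [e1, e2, ← zpow_sub₀ hp0]
  congr 1
  ring


lemma VSC_bernoulli_identity (p : ℕ) (m : ℕ) :
    (p : ℚ) * bernoulli m =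
      (∑ x ∈ range p, (x : ℚ) ^ m) -
        ∑ i ∈ range m, bernoulli i * (m.choose i) * (p : ℚ) ^ (m + 1 - i) / ((m + 1 - i : ℕ) : ℚ) := by
  have h := sum_range_pow p m
  rw [Finset.sum_range_succ] at h
  have hm1 : ((m : ℚ) + 1) ≠ 0 := by positivity
  have hlast : bernoulli m * ((m + 1).choose m) * (p : ℚ) ^ (m + 1 - m) / (m + 1) 
      = (p : ℚ) * bernoulli m := by
    rw [Nat.choose_succ_self_right, Nat.add_sub_cancel_left, pow_one]
    push_cast
    field_simp
  have hterm : ∀ i ∈ range m,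
      bernoulli i * ((m + 1).choose i) * (p : ℚ) ^ (m + 1 - i) / (m + 1)
        = bernoulli i * (m.choose i) * (p : ℚ) ^ (m + 1 - i) / ((m + 1 - i : ℕ) : ℚ) := by
    intro i hi
    rw [mem_range] at hi
    have hkey : (m.choose i : ℚ) * ((m : ℚ) + 1) = ((m + 1).choose i : ℚ) * ((m + 1 - i : ℕ) : ℚ) := by
      exact_mod_cast congrArg (Nat.cast : ℕ → ℚ) (Nat.choose_mul_succ_eq m i)
    have hsub : ((m + 1 - i : ℕ) : ℚ) ≠ 0 := by
      have : 0 < m + 1 - i := by omega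
      exact_mod_cast this.ne'
    field_simp
    linear_combination (-(bernoulli i * (p:ℚ) ^ (m + 1 - i))) * hkey
  rw [Finset.sum_congr rfl hterm, hlast] at h
  linarith [h]


lemma VSC_padicNorm_bernoulli_le (p : ℕ) [hp : Fact p.Prime] (n : ℕ) :
    padicNorm p (bernoulli n) ≤ p := by
  have hp1 : (1 : ℚ) < p := by exact_mod_cast hp.out.one_lt
  have hp0 : (p : ℚ) ≠ 0 := by positivity
  induction n using Nat.strong_induction_on with
  | _ n ih =>
    rcases Nat.eq_zero_or_pos n with rfl | hn
    · simpa [bernoulli_zero, padicNorm.one] using hp1.le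
    have key : padicNorm p ((p : ℚ) * bernoulli n) ≤ 1 := by
      rw [VSC_bernoulli_identity p n]
      refine le_trans padicNorm.sub (max_le ?_ ?_)
      · have : (∑ x ∈ range p, (x : ℚ) ^ n) = ((∑ x ∈ range p, x ^ n : ℕ) : ℚ) := by
          push_cast; ring
        rw [this]
        exact padicNorm.of_nat _
      · refine padicNorm.sum_le' (fun i hi => ?_) zero_le_one
        rw [mem_range] at hi
        set j := n + 1 - i with hj
        have hj1 : 1 ≤ j := by omega
        have heq : bernoulli i * (n.choose i) * (p : ℚ) ^ (n + 1 - i) / ((n + 1 - i : ℕ) : ℚ)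
            = bernoulli i * ((n.choose i : ℕ) : ℚ) * ((p : ℚ) ^ j / (j : ℚ)) := by
          rw [hj]; ring
        rw [heq, padicNorm.mul, padicNorm.mul, VSC_padicNorm_pow_div hj1]
        have hB : padicNorm p (bernoulli i) ≤ p := ih i (by omega)
        have hC : padicNorm p ((n.choose i : ℕ) : ℚ) ≤ 1 := padicNorm.of_nat _
        have hD : (p : ℚ) ^ ((padicValNat p j : ℤ) - j) ≤ (p : ℚ) ^ (-1 : ℤ) := by
          apply zpow_le_zpow_right₀ hp1.le
          have := VSC_padicValNat_lt (p := p) hj1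
          omega
        calc padicNorm p (bernoulli i) * padicNorm p ((n.choose i : ℕ) : ℚ)
              * (p : ℚ) ^ ((padicValNat p j : ℤ) - j)
            ≤ (p : ℚ) * 1 * (p : ℚ) ^ (-1 : ℤ) := by
              gcongr
              exact padicNorm.nonneg _
          _ = 1 := by
              rw [zpow_neg_one, mul_one, mul_inv_cancel₀ hp0]
    rw [padicNorm.mul, padicNorm.padicNorm_p_of_prime] at key
    calc padicNorm p (bernoulli n) = (p : ℚ) * ((p:ℚ)⁻¹ * padicNorm p (bernoulli n)) := by
          field_simp
      _ ≤ (p : ℚ) * 1 := by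
          exact mul_le_mul_of_nonneg_left key (by positivity)
      _ = p := mul_one _


lemma VSC_zmod_sum_pow (p : ℕ) [hp : Fact p.Prime] {m : ℕ} (hm : 1 ≤ m) :
    ((∑ x ∈ range p, x ^ m : ℕ) : ZMod p) = if (p - 1) ∣ m then -1 else 0 := by
  classical
  haveI : NeZero p := ⟨hp.out.ne_zero⟩
  have h1 : ((∑ x ∈ range p, x ^ m : ℕ) : ZMod p) = ∑ x ∈ range p, (x : ZMod p) ^ m := by
    push_cast; ring
  have h2 : ∑ x ∈ range p, (x : ZMod p) ^ m = ∑ x : ZMod p, x ^ m := by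
    refine Finset.sum_bij' (fun (a : ℕ) (_ : a ∈ range p) => (a : ZMod p))
      (fun x _ => x.val) (fun a _ => mem_univ _)
      (fun x _ => mem_range.mpr (ZMod.val_lt x))
      (fun a ha => ZMod.val_cast_of_lt (mem_range.mp ha))
      (fun x _ => ZMod.natCast_rightInverse x) (fun a _ => rfl)
  have h3 : ∑ x : ZMod p, x ^ m = ∑ x : (ZMod p)ˣ, ((x : ZMod p)) ^ m := by
    let φ : (ZMod p)ˣ ↪ ZMod p := ⟨fun x => x, Units.val_injective⟩
    have hmap : univ.map φ = univ \ {0} := by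
      ext x
      constructor
      · intro hx
        rcases Finset.mem_map.mp hx with ⟨u, -, rfl⟩
        exact Finset.mem_sdiff.mpr ⟨mem_univ _, by simp [φ, u.ne_zero]⟩
      · intro hx
        have hx0 : x ≠ 0 := by simpa using (Finset.mem_sdiff.mp hx).2
        exact Finset.mem_map.mpr ⟨(isUnit_iff_ne_zero.mpr hx0).unit, mem_univ _, by simp [φ]⟩
    calc ∑ x : ZMod p, x ^ m = ∑ x ∈ univ \ {0}, x ^ m := by
          rw [Finset.sum_sdiff_eq_sub (Finset.subset_univ _)]
          simp [zero_pow (by omega : m ≠ 0)]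
      _ = ∑ x ∈ univ.map φ, x ^ m := by rw [hmap]
      _ = ∑ x : (ZMod p)ˣ, ((x : ZMod p)) ^ m := by rw [Finset.sum_map]; rfl
  rw [h1, h2, h3, FiniteField.sum_pow_units, ZMod.card]


lemma VSC_key_congruence (p : ℕ) [hp : Fact p.Prime] {m : ℕ} (hm2 : 2 ≤ m) (heven : Even m) :
    padicNorm p ((p : ℚ) * bernoulli m - ∑ x ∈ range p, (x : ℚ) ^ m)
      ≤ (p : ℚ) ^ (-1 : ℤ) := by
  have hp1 : (1 : ℚ) < p := by exact_mod_cast hp.out.one_lt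
  have hp0 : (p : ℚ) ≠ 0 := by positivity
  have heq : (p : ℚ) * bernoulli m - ∑ x ∈ range p, (x : ℚ) ^ m
      = -(∑ i ∈ range m, bernoulli i * (m.choose i) * (p : ℚ) ^ (m + 1 - i)
          / ((m + 1 - i : ℕ) : ℚ)) := by
    rw [VSC_bernoulli_identity p m]; ring
  rw [heq, padicNorm.neg]
  refine padicNorm.sum_le' (fun i hi => ?_) (by positivity)
  rw [mem_range] at hi
  set j := m + 1 - i with hj
  have hj1 : 1 ≤ j := by omega
  by_cases hi2 : i + 2 ≤ m
  · -- j ≥ 3 case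
    have hj3 : 3 ≤ j := by omega
    have heq2 : bernoulli i * (m.choose i) * (p : ℚ) ^ (m + 1 - i) / ((m + 1 - i : ℕ) : ℚ)
        = bernoulli i * ((m.choose i : ℕ) : ℚ) * ((p : ℚ) ^ j / (j : ℚ)) := by
      rw [hj]; ring
    rw [heq2, padicNorm.mul, padicNorm.mul, VSC_padicNorm_pow_div hj1]
    have hD : (p : ℚ) ^ ((padicValNat p j : ℤ) - j) ≤ (p : ℚ) ^ (-2 : ℤ) := by
      apply zpow_le_zpow_right₀ hp1.le
      have := VSC_padicValNat_add_two_le (p := p) hj3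
      omega
    calc padicNorm p (bernoulli i) * padicNorm p ((m.choose i : ℕ) : ℚ)
          * (p : ℚ) ^ ((padicValNat p j : ℤ) - j)
        ≤ (p : ℚ) * 1 * (p : ℚ) ^ (-2 : ℤ) := by
          gcongr
          · exact padicNorm.nonneg _
          · exact VSC_padicNorm_bernoulli_le p i
          · exact padicNorm.of_nat _
      _ = (p : ℚ) ^ (-1 : ℤ) := by
          rw [show (-1 : ℤ) = 1 + (-2) by ring, zpow_add₀ hp0, zpow_one, mul_one]
  · -- i = m - 1, j = 2
    have him : i = m - 1 := by omega
    have hj2 : j = 2 := by omega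
    rcases eq_or_lt_of_le hm2 with h2 | h4
    · -- m = 2, i = 1
      subst h2
      have hi1 : i = 1 := by omega
      subst hi1
      have heq2 : bernoulli 1 * ((2).choose 1 : ℚ) * (p : ℚ) ^ (2 + 1 - 1) / ((2 + 1 - 1 : ℕ) : ℚ)
          = -((p : ℚ) ^ 2 / ((2 : ℕ) : ℚ)) := by
        norm_num [bernoulli_one]
        ring
      rw [heq2, padicNorm.neg, VSC_padicNorm_pow_div (by norm_num : (1:ℕ) ≤ 2)]
      apply zpow_le_zpow_right₀ hp1.le
      have := VSC_padicValNat_lt (p := p) (by norm_num : (1:ℕ) ≤ 2)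
      omega
    ·
      have hodd : Odd i := by
        obtain ⟨t, ht⟩ := heven
        exact ⟨t - 1, by omega⟩
      have hB0 : bernoulli i = 0 := by
        rw [bernoulli_eq_bernoulli'_of_ne_one (by omega)]
        exact bernoulli'_eq_zero_of_odd hodd (by omega)
      rw [hB0]
      simp only [zero_mul, zero_div, padicNorm.zero]
      positivity


theorem bernoulli_den_prime_dvd_iff (k : ℕ) (hk : 1 ≤ k) (p : ℕ) (hp : p.Prime) :
    p ∣ (bernoulli (2 * k)).den ↔ (p - 1) ∣ 2 * k := by
  haveI : Fact p.Prime := ⟨hp⟩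
  have hp1 : (1 : ℚ) < p := by exact_mod_cast hp.one_lt
  have hp0 : (p : ℚ) ≠ 0 := by positivity
  set m := 2 * k with hm
  have hm2 : 2 ≤ m := by omega
  have heven : Even m := ⟨k, by omega⟩
  have hS : (∑ x ∈ range p, (x : ℚ) ^ m) = ((∑ x ∈ range p, x ^ m : ℕ) : ℚ) := by
    push_cast; ring
  have hkey := VSC_key_congruence p hm2 heven
  have hnormp : padicNorm p ((p : ℚ)) = (p : ℚ)⁻¹ := padicNorm.padicNorm_p_of_prime
  have hmulB : padicNorm p ((p : ℚ) * bernoulli m) = (p : ℚ)⁻¹ * padicNorm p (bernoulli m) := by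
    rw [padicNorm.mul, hnormp]
  rw [VSC_den_dvd_iff_one_lt_padicNorm]
  by_cases hd : (p - 1) ∣ m
  · simp only [hd, iff_true]
    -- S ≡ -1 mod p, so p ∣ S + 1
    have hdvd1 : (p : ℤ) ∣ ((∑ x ∈ range p, x ^ m : ℕ) : ℤ) + 1 := by
      have hzs := VSC_zmod_sum_pow p (m := m) (by omega)
      rw [if_pos hd] at hzs
      have h0 : (((∑ x ∈ range p, x ^ m : ℕ) + 1 : ℕ) : ZMod p) = 0 := by
        push_cast [hzs]; ring
      have := (ZMod.natCast_eq_zero_iff _ _).mp h0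
      exact_mod_cast Int.natCast_dvd_natCast.mpr this
    have hnormS1 : padicNorm p ((∑ x ∈ range p, (x : ℚ) ^ m) + 1) ≤ (p : ℚ) ^ (-1 : ℤ) := by
      rw [hS]
      have := (padicNorm.dvd_iff_norm_le (p := p) (n := 1)
        (z := ((∑ x ∈ range p, x ^ m : ℕ) : ℤ) + 1)).mp (by simpa using hdvd1)
      simpa using this
    have hpB1 : padicNorm p ((p : ℚ) * bernoulli m + 1) ≤ (p : ℚ) ^ (-1 : ℤ) := by
      have heq : (p : ℚ) * bernoulli m + 1
          = ((p : ℚ) * bernoulli m - ∑ x ∈ range p, (x : ℚ) ^ m)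
            + ((∑ x ∈ range p, (x : ℚ) ^ m) + 1) := by ring
      rw [heq]
      exact le_trans padicNorm.nonarchimedean (max_le hkey hnormS1)
    have h1lt : padicNorm p ((p : ℚ) * bernoulli m + 1) < 1 := by
      refine lt_of_le_of_lt hpB1 ?_
      rw [zpow_neg_one]
      exact inv_lt_one_of_one_lt₀ hp1
    have hnormpB : padicNorm p ((p : ℚ) * bernoulli m) = 1 := by
      have heq : (p : ℚ) * bernoulli m = ((p : ℚ) * bernoulli m + 1) + (-1) := by ring
      rw [heq, padicNorm.add_eq_max_of_ne (by
        rw [padicNorm.neg, padicNorm.one]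
        exact ne_of_lt h1lt), padicNorm.neg, padicNorm.one]
      exact max_eq_right h1lt.le
    rw [hmulB] at hnormpB
    have hBval : padicNorm p (bernoulli m) = p := by
      have : (p : ℚ) * ((p : ℚ)⁻¹ * padicNorm p (bernoulli m)) = (p : ℚ) * 1 := by
        rw [hnormpB]
      rwa [← mul_assoc, mul_inv_cancel₀ hp0, one_mul, mul_one] at this
    rw [hBval]
    exact hp1
  · simp only [hd, iff_false, not_lt]
    -- p ∣ S
    have hdvd : (p : ℤ) ∣ ((∑ x ∈ range p, x ^ m : ℕ) : ℤ) := by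
      have := VSC_zmod_sum_pow p (m := m) (by omega)
      rw [if_neg hd] at this
      exact_mod_cast (ZMod.natCast_eq_zero_iff _ _).mp this
    have hnormS : padicNorm p ((∑ x ∈ range p, (x : ℚ) ^ m)) ≤ (p : ℚ) ^ (-1 : ℤ) := by
      rw [hS]
      have := (padicNorm.dvd_iff_norm_le (p := p) (n := 1)
        (z := ((∑ x ∈ range p, x ^ m : ℕ) : ℤ))).mp (by simpa using hdvd)
      simpa using this
    have hB : padicNorm p ((p : ℚ) * bernoulli m) ≤ (p : ℚ) ^ (-1 : ℤ) := by
      have heq : (p : ℚ) * bernoulli m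
          = ((p : ℚ) * bernoulli m - ∑ x ∈ range p, (x : ℚ) ^ m)
            + ∑ x ∈ range p, (x : ℚ) ^ m := by ring
      rw [heq]
      exact le_trans padicNorm.nonarchimedean (max_le hkey hnormS)
    rw [hmulB, zpow_neg_one] at hB
    have h2 := mul_le_mul_of_nonneg_left hB (le_of_lt (by positivity : (0:ℚ) < p))
    rwa [← mul_assoc, mul_inv_cancel₀ hp0, one_mul] at h2
end

section
/- Let p be a prime, a, b ≥ 0, k ≥ 1. Then D'_{2k}·Σ_{j=0}^{p^b - 1} Σ_{s=0}^{p^a - 1} j·(s + j·p^a)^{2k-1} ≡ 0 (mod p^{a+b}). -/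
/-!
Write `q = p ^ a`, `N = p ^ b`, `n = 2k - 1` and `S_m(X) = ∑_{x < X} x ^ m`. Summation by parts
turns the double sum into `(N - 1) S_n(qN) - ∑_{j < N} S_n(jq)`, and Faulhaber's formula turns the
last sum into `∑_i B_i (n choose i) q ^ r S_r(N) / r` with `r = n + 1 - i`. Everything is then
estimated `p`-adically from three facts: `p B_m` is `p`-integral, `S_m(p ^ c) ≡ p ^ c B_m` modulo
`p ^ (2c - 1 - v_p(2))`, and `12 ∣ D'_{2k}` (von Staudt–Clausen at `p = 2, 3`). The factor `12`
pays for the denominators `r ≥ 3`; the terms `r = 1, 2` are computed in closed form. When `a = 0`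
the sum is `S_{2k}(p ^ b)`, and the integrality of `D'_{2k} B_{2k}` is used instead.
-/

open Finset

def ValGe (p : ℕ) [Fact p.Prime] (e : ℤ) (x : ℚ_[p]) : Prop :=
  ‖x‖ ≤ (p : ℝ) ^ (-e)

lemma Padic.norm_natCast_eq_zpow_neg_padicValNat {p : ℕ} [Fact p.Prime] {r : ℕ} (hr : r ≠ 0) :
    ‖(r : ℚ_[p])‖ = (p : ℝ) ^ (-(padicValNat p r : ℤ)) := by
  rw [Padic.norm_eq_zpow_neg_valuation (by exact_mod_cast hr), Padic.valuation_natCast]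

namespace ValGe

variable {p : ℕ} [hp : Fact p.Prime] {e f : ℤ} {x y : ℚ_[p]}

lemma mono (hx : ValGe p e x) (h : f ≤ e) : ValGe p f x :=
  hx.trans (zpow_le_zpow_right₀ (Nat.one_le_cast.mpr hp.out.one_le) (neg_le_neg h))

lemma zero : ValGe p e 0 := by
  unfold ValGe; rw [norm_zero]; positivity

lemma add (hx : ValGe p e x) (hy : ValGe p e y) : ValGe p e (x + y) :=
  (Padic.nonarchimedean x y).trans (max_le hx hy)

lemma neg (hx : ValGe p e x) : ValGe p e (-x) := by
  rwa [ValGe, norm_neg]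

lemma sub (hx : ValGe p e x) (hy : ValGe p e y) : ValGe p e (x - y) :=
  sub_eq_add_neg x y ▸ hx.add hy.neg

lemma mul (hx : ValGe p e x) (hy : ValGe p f y) : ValGe p (e + f) (x * y) := by
  unfold ValGe at *
  rw [norm_mul, neg_add, zpow_add₀ (Nat.cast_ne_zero.mpr hp.out.ne_zero)]
  exact mul_le_mul hx hy (norm_nonneg _) (by positivity)

lemma pow (hx : ValGe p e x) (n : ℕ) : ValGe p (n * e) (x ^ n) := by
  induction n with
  | zero => simp [ValGe]
  | succ n ih => simpa [pow_succ, add_mul] using ih.mul hx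

lemma sum {ι : Type*} {s : Finset ι} {g : ι → ℚ_[p]} (h : ∀ i ∈ s, ValGe p e (g i)) :
    ValGe p e (∑ i ∈ s, g i) :=
  Finset.sum_induction g (ValGe p e) (fun _ _ => add) zero h

lemma intCast_iff {z : ℤ} {n : ℕ} : ValGe p n (z : ℚ_[p]) ↔ (p : ℤ) ^ n ∣ z :=
  Padic.norm_int_le_pow_iff_dvd z n

lemma intCast (z : ℤ) : ValGe p 0 (z : ℚ_[p]) := by
  simpa using (intCast_iff (p := p) (n := 0)).mpr (one_dvd z)

lemma natCast (n : ℕ) : ValGe p 0 (n : ℚ_[p]) := by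
  simpa using intCast (p := p) n

lemma p_pow (c : ℕ) : ValGe p c ((p : ℚ_[p]) ^ c) := by
  rw [ValGe, Padic.norm_p_pow]

lemma natCast_padicValNat {r : ℕ} (hr : r ≠ 0) : ValGe p (padicValNat p r) (r : ℚ_[p]) :=
  (Padic.norm_natCast_eq_zpow_neg_padicValNat hr).le

lemma inv_natCast {r : ℕ} (hr : r ≠ 0) : ValGe p (-padicValNat p r) (r : ℚ_[p])⁻¹ := by
  rw [ValGe, norm_inv, Padic.norm_natCast_eq_zpow_neg_padicValNat hr, ← zpow_neg, neg_neg]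

lemma of_p_mul (h : ValGe p e (p * x)) : ValGe p (e - 1) x := by
  unfold ValGe at *
  rw [norm_mul, Padic.norm_p, inv_mul_le_iff₀ (Nat.cast_pos.mpr hp.out.pos)] at h
  rwa [neg_sub, sub_eq_neg_add, zpow_add₀ (Nat.cast_ne_zero.mpr hp.out.ne_zero), zpow_one,
    mul_comm]

end ValGe

section padicValNat

variable {p : ℕ} [hp : Fact p.Prime]

lemma sub_one_mul_padicValNat_lt {r : ℕ} (hr : r ≠ 0) : (p - 1) * padicValNat p r < r := by
  set v := padicValNat p r
  have hpow : p ^ v ≤ r := Nat.le_of_dvd (Nat.pos_of_ne_zero hr) pow_padicValNat_dvd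
  have hp1 : 1 ≤ p := hp.out.one_le
  have hbernoulli : 1 + (v : ℤ) * (p - 1) ≤ (p : ℤ) ^ v := by
    simpa using one_add_mul_le_pow (a := (p : ℤ) - 1) (by omega) v
  zify [hp1] at hpow ⊢
  linarith

lemma padicValNat_two_le_one : padicValNat p 2 ≤ 1 := by
  by_contra! h
  have := Nat.le_of_dvd two_pos ((padicValNat_dvd_iff_le two_ne_zero).mpr h)
  nlinarith [hp.out.two_le]

lemma padicValNat_add_two_le {r : ℕ} (hr : 2 ≤ r) :
    padicValNat p r + 2 ≤ r + padicValNat p 2 := by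
  have h := sub_one_mul_padicValNat_lt (p := p) (r := r) (by omega)
  rcases eq_or_ne p 2 with rfl | h2
  · have := one_le_padicValNat_of_dvd (p := 2) two_ne_zero dvd_rfl
    omega
  · have h3 : 3 ≤ p := hp.out.two_le.lt_of_ne' h2
    have := Nat.mul_le_mul_right (padicValNat p r) (show 2 ≤ p - 1 by omega)
    omega

lemma padicValNat_add_three_le {r : ℕ} (hr : 3 ≤ r) :
    padicValNat p r + 3 ≤ r + padicValNat p 12 := by
  have h := sub_one_mul_padicValNat_lt (p := p) (r := r) (by omega)
  rcases eq_or_ne p 2 with rfl | h2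
  · have := (padicValNat_dvd_iff_le (p := 2) (n := 2) (a := 12) (by norm_num)).mp (by norm_num)
    omega
  rcases eq_or_ne p 3 with rfl | h3
  · have := one_le_padicValNat_of_dvd (p := 3) (n := 12) (by norm_num) (by norm_num)
    omega
  · have h4 : p ≠ 4 := by rintro rfl; exact absurd hp.out (by decide)
    have h5 : 5 ≤ p := by have := hp.out.two_le; omega
    have := Nat.mul_le_mul_right (padicValNat p r) (show 4 ≤ p - 1 by omega)
    omega

end padicValNat

section PowerSums

theorem sum_range_pow_eq_sum_bernoulli {K : Type*} [Field K] [CharZero K] (n m : ℕ) :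
    ∑ x ∈ range n, (x : K) ^ m =
      ∑ i ∈ range (m + 1), bernoulli i * m.choose i * (n : K) ^ (m + 1 - i) / (m + 1 - i : ℕ) := by
  have h := congrArg (Rat.cast : ℚ → K) (sum_range_pow n m)
  push_cast at h
  rw [h]
  refine sum_congr rfl fun i hi => ?_
  have hi : i ≤ m := Nat.lt_succ_iff.mp (mem_range.mp hi)
  have hchoose : (m.choose i : K) * (m + 1) = (m + 1).choose i * (m + 1 - i : ℕ) := by
    exact_mod_cast Nat.choose_mul_succ_eq m i
  rw [div_eq_div_iff (Nat.cast_add_one_ne_zero m) (Nat.cast_ne_zero.mpr (by omega))]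
  linear_combination bernoulli i * (n : K) ^ (m + 1 - i) * hchoose.symm

theorem sum_range_sum_range_mul_pow_eq {K : Type*} [Field K] [CharZero K] (q N n : ℕ) :
    ∑ j ∈ range N, ∑ x ∈ range (j * q), (x : K) ^ n =
      ∑ i ∈ range (n + 1), bernoulli i * n.choose i * (q : K) ^ (n + 1 - i) / (n + 1 - i : ℕ) *
        ∑ x ∈ range N, (x : K) ^ (n + 1 - i) := by
  rw [sum_congr rfl fun j _ => sum_range_pow_eq_sum_bernoulli (j * q) n, sum_comm]
  refine sum_congr rfl fun i _ => ?_
  rw [mul_sum]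
  refine sum_congr rfl fun j _ => ?_
  push_cast
  ring

variable {R : Type*} [CommRing R]

lemma sum_range_natCast_mul_sub (F : ℕ → R) (N : ℕ) :
    ∑ j ∈ range N, (j : R) * (F (j + 1) - F j) = (N - 1) * F N - ∑ j ∈ range N, F j + F 0 := by
  induction N with
  | zero => simp
  | succ N ih => rw [sum_range_succ, ih, sum_range_succ]; push_cast; ring

lemma sum_range_mul_sum_range_add_mul_pow (q N n : ℕ) :
    ∑ j ∈ range N, ∑ s ∈ range q, (j : R) * ((s : R) + j * q) ^ n =
      (N - 1) * ∑ x ∈ range (N * q), (x : R) ^ n -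
        ∑ j ∈ range N, ∑ x ∈ range (j * q), (x : R) ^ n := by
  have hblock (j : ℕ) : ∑ s ∈ range q, ((s : R) + j * q) ^ n =
      ∑ x ∈ range ((j + 1) * q), (x : R) ^ n - ∑ x ∈ range (j * q), (x : R) ^ n := by
    rw [add_one_mul, sum_range_add, add_sub_cancel_left]
    refine sum_congr rfl fun s _ => ?_
    push_cast
    ring
  simp_rw [← mul_sum, hblock]
  rw [sum_range_natCast_mul_sub (fun j => ∑ x ∈ range (j * q), (x : R) ^ n)]
  simp

lemma two_mul_sum_range_natCast (N : ℕ) : 2 * ∑ x ∈ range N, (x : R) = N * (N - 1) := by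
  induction N with
  | zero => simp
  | succ N ih => rw [sum_range_succ, mul_add, ih]; push_cast; ring

lemma six_mul_sum_range_natCast_sq (N : ℕ) :
    6 * ∑ x ∈ range N, (x : R) ^ 2 = N * (N - 1) * (2 * N - 1) := by
  induction N with
  | zero => simp
  | succ N ih => rw [sum_range_succ, mul_add, ih]; push_cast; ring

end PowerSums

section Padic

variable {p : ℕ} [hp : Fact p.Prime]

lemma valGe_faulhaber_term {B x : ℚ_[p]} {e : ℤ} (hB : ValGe p (-1) B) (hx : ValGe p e x)
    (n : ℕ) {r : ℕ} (hr : r ≠ 0) :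
    ValGe p (r * e - 1 - padicValNat p r) (B * n * x ^ r / r) := by
  rw [div_eq_mul_inv]
  exact (((hB.mul (ValGe.natCast n)).mul (hx.pow r)).mul (ValGe.inv_natCast hr)).mono
    (by linarith)

lemma valGe_sum_range_pow_sub_of_bernoulli {m c : ℕ} (hc : 1 ≤ c)
    (hB : ∀ i < m, ValGe p (-1) (bernoulli i : ℚ_[p])) :
    ValGe p (2 * c - 1 - padicValNat p 2)
      (∑ x ∈ range (p ^ c), (x : ℚ_[p]) ^ m - p ^ c * bernoulli m) := by
  rw [sum_range_pow_eq_sum_bernoulli, sum_range_succ, Nat.choose_self, Nat.add_sub_cancel_left]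
  simp only [Nat.cast_pow, Nat.cast_one, pow_one, div_one, mul_one]
  rw [mul_comm _ (bernoulli m : ℚ_[p]), add_sub_cancel_right]
  refine ValGe.sum fun i hi => ?_
  have hi : i < m := mem_range.mp hi
  have hr2 : 2 ≤ m + 1 - i := by omega
  generalize m + 1 - i = r at hr2 ⊢
  have hr : (padicValNat p r : ℤ) + 2 ≤ r + padicValNat p 2 := by
    exact_mod_cast padicValNat_add_two_le hr2
  refine (valGe_faulhaber_term (hB i hi) (ValGe.p_pow c) _ (by omega)).mono ?_
  have hr2' : (2 : ℤ) ≤ r := by exact_mod_cast hr2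
  have hc' : (1 : ℤ) ≤ c := by exact_mod_cast hc
  nlinarith

theorem valGe_bernoulli (m : ℕ) : ValGe p (-1) (bernoulli m : ℚ_[p]) := by
  induction m using Nat.strong_induction_on with
  | _ m ih =>
  have htail := valGe_sum_range_pow_sub_of_bernoulli (m := m) le_rfl ih
  have hsum : ValGe p 0 (∑ x ∈ range (p ^ 1), (x : ℚ_[p]) ^ m) :=
    ValGe.sum fun x _ => by simpa using ValGe.natCast (p := p) (x ^ m)
  have h2 := padicValNat_two_le_one (p := p)
  have hpB : ValGe p 0 (p * bernoulli m) := by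
    simpa using hsum.sub (htail.mono (by omega))
  simpa using hpB.of_p_mul

lemma valGe_sum_range_pow {m c : ℕ} (hc : 1 ≤ c) :
    ValGe p (c - 1) (∑ x ∈ range (p ^ c), (x : ℚ_[p]) ^ m) := by
  have htail := valGe_sum_range_pow_sub_of_bernoulli (p := p) (m := m) hc
    fun i _ => valGe_bernoulli i
  have h2 := padicValNat_two_le_one (p := p)
  simpa using (htail.mono (by omega)).add
    (((ValGe.p_pow c).mul (valGe_bernoulli m)).mono (by omega))

lemma valGe_twelve_mul_sum_range_pow_sub {m c : ℕ} (hc : 1 ≤ c) :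
    ValGe p c (12 * (∑ x ∈ range (p ^ c), (x : ℚ_[p]) ^ m - p ^ c * bernoulli m)) := by
  have htail := valGe_sum_range_pow_sub_of_bernoulli (p := p) (m := m) hc
    fun i _ => valGe_bernoulli i
  have h12 : padicValNat p 2 ≤ padicValNat p 12 :=
    (padicValNat_dvd_iff_le (by norm_num)).mp (pow_padicValNat_dvd.trans (by norm_num))
  have h := (ValGe.natCast_padicValNat (p := p) (r := 12) (by norm_num)).mul htail
  rw [Nat.cast_ofNat] at h
  exact h.mono (by omega)

lemma norm_bernoulli_of_sub_one_dvd {k : ℕ} (hk : k ≠ 0) (h : p - 1 ∣ 2 * k) :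
    ‖(bernoulli (2 * k) : ℚ_[p])‖ = p := by
  obtain ⟨z, hz⟩ := Bernoulli.vonStaudt_clausen k
  set F := (range (2 * k + 2)).filter fun q => q.Prime ∧ q - 1 ∣ 2 * k
  have hpF : p ∈ F := by
    have := Nat.le_of_dvd (by omega) h
    exact mem_filter.mpr ⟨mem_range.mpr (by omega), hp.out, h⟩
  have hsplit : (bernoulli (2 * k) : ℚ_[p]) + (p : ℚ_[p])⁻¹ =
      z - ∑ q ∈ F.erase p, (q : ℚ_[p])⁻¹ := by
    have := congrArg (Rat.cast : ℚ → ℚ_[p]) hz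
    rw [← add_sum_erase F _ hpF] at this
    push_cast at this
    simp only [one_div] at this
    linear_combination -this
  have hint : ValGe p 0 ((bernoulli (2 * k) : ℚ_[p]) + (p : ℚ_[p])⁻¹) := by
    rw [hsplit]
    refine (ValGe.intCast z).sub (ValGe.sum fun q hq => ?_)
    obtain ⟨hqp, hqF⟩ := mem_erase.mp hq
    have hcop : p.Coprime q := (Nat.coprime_primes hp.out (mem_filter.mp hqF).2.1).mpr hqp.symm
    rw [ValGe, norm_inv, Padic.norm_natCast_eq_one_iff.mpr hcop]
    simp
  have hlt : ‖(bernoulli (2 * k) : ℚ_[p]) + (p : ℚ_[p])⁻¹‖ < ‖(p : ℚ_[p])⁻¹‖ := by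
    rw [norm_inv, Padic.norm_p, inv_inv]
    exact hint.trans_lt (by simpa using hp.out.one_lt)
  rw [Padic.norm_eq_of_norm_add_lt_right hlt, norm_inv, Padic.norm_p, inv_inv]

lemma pow_dvd_den_bernoulli_div {k : ℕ} (hk : k ≠ 0) (h : p - 1 ∣ 2 * k) :
    p ^ (padicValNat p (2 * k) + 1) ∣ (bernoulli (2 * k) / (2 * k : ℚ)).den := by
  set x := bernoulli (2 * k) / (2 * k : ℚ)
  have hx : ‖(x : ℚ_[p])‖ = (p : ℝ) ^ ((padicValNat p (2 * k) + 1 : ℕ) : ℤ) := by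
    have h2k := Padic.norm_natCast_eq_zpow_neg_padicValNat (p := p) (r := 2 * k) (by omega)
    simp only [x]
    push_cast at h2k ⊢
    rw [norm_div, norm_bernoulli_of_sub_one_dvd hk h, h2k, zpow_neg, div_inv_eq_mul,
      zpow_add_one₀ (Nat.cast_ne_zero.mpr hp.out.ne_zero), mul_comm]
  have hden : ‖(x.den : ℚ_[p])‖ * ‖(x : ℚ_[p])‖ = ‖(x.num : ℚ_[p])‖ := by
    rw [← norm_mul, mul_comm]
    exact_mod_cast congrArg (fun y : ℚ => ‖(y : ℚ_[p])‖) (Rat.mul_den_eq_num x)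
  have hval : ValGe p (padicValNat p (2 * k) + 1 : ℕ) ((x.den : ℤ) : ℚ_[p]) := by
    have hxpos : 0 < ‖(x : ℚ_[p])‖ := hx ▸ zpow_pos (Nat.cast_pos.mpr hp.out.pos) _
    rw [ValGe, zpow_neg, Int.cast_natCast, ← hx, inv_eq_one_div, le_div_iff₀ hxpos, hden]
    exact Padic.norm_int_le_one _
  exact_mod_cast ValGe.intCast_iff.mp hval

theorem twelve_dvd_den_bernoulli_div {k : ℕ} (hk : k ≠ 0) :
    12 ∣ (bernoulli (2 * k) / (2 * k : ℚ)).den := by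
  have h4 : 2 ^ 2 ∣ (bernoulli (2 * k) / (2 * k : ℚ)).den := by
    have h1 : 1 ≤ padicValNat 2 (2 * k) := one_le_padicValNat_of_dvd (by omega) (dvd_mul_right 2 k)
    exact (pow_dvd_pow 2 (by omega)).trans (pow_dvd_den_bernoulli_div hk (by simp))
  have h3 : 3 ∣ (bernoulli (2 * k) / (2 * k : ℚ)).den :=
    (dvd_pow_self 3 (by omega)).trans (pow_dvd_den_bernoulli_div hk (dvd_mul_right 2 k))
  exact Nat.Coprime.mul_dvd_of_dvd_of_dvd (by norm_num) h4 h3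

lemma valGe_den_mul_bernoulli {k : ℕ} (hk : k ≠ 0) :
    ValGe p 0 (((bernoulli (2 * k) / (2 * k : ℚ)).den : ℚ_[p]) * bernoulli (2 * k)) := by
  set x := bernoulli (2 * k) / (2 * k : ℚ)
  have hx : (x.den : ℚ) * bernoulli (2 * k) = x.num * (2 * k : ℕ) := by
    rw [← Rat.mul_den_eq_num, Nat.cast_mul, Nat.cast_ofNat]
    simp only [x]
    field_simp
  have := congrArg (Rat.cast : ℚ → ℚ_[p]) hx
  push_cast at this
  rw [this]
  simpa using (ValGe.intCast x.num).mul (ValGe.natCast (p := p) (2 * k))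

lemma valGe_den_mul_sum_range_pow {k c : ℕ} (hk : k ≠ 0) (hc : 1 ≤ c) :
    ValGe p c (((bernoulli (2 * k) / (2 * k : ℚ)).den : ℚ_[p]) *
      ∑ x ∈ range (p ^ c), (x : ℚ_[p]) ^ (2 * k)) := by
  obtain ⟨t, ht⟩ := twelve_dvd_den_bernoulli_div hk
  have hsplit : ((bernoulli (2 * k) / (2 * k : ℚ)).den : ℚ_[p]) *
      ∑ x ∈ range (p ^ c), (x : ℚ_[p]) ^ (2 * k) =
      t * (12 * (∑ x ∈ range (p ^ c), (x : ℚ_[p]) ^ (2 * k) - p ^ c * bernoulli (2 * k))) +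
        p ^ c * (((bernoulli (2 * k) / (2 * k : ℚ)).den : ℚ_[p]) * bernoulli (2 * k)) := by
    rw [ht]
    push_cast
    ring
  rw [hsplit]
  exact (((ValGe.natCast t).mul (valGe_twelve_mul_sum_range_pow_sub hc)).mono (by omega)).add
    (((ValGe.p_pow c).mul (valGe_den_mul_bernoulli hk)).mono (by omega))

lemma valGe_two_mul_bernoulli_of_odd {n : ℕ} (hn : Odd n) :
    ValGe p 0 (2 * (bernoulli n : ℚ_[p])) := by
  rcases eq_or_ne n 1 with rfl | hn1
  · have h : 2 * (bernoulli 1 : ℚ_[p]) = ((-1 : ℤ) : ℚ_[p]) := by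
      rw [bernoulli_one]; push_cast; ring
    exact h ▸ ValGe.intCast (-1)
  · rw [bernoulli_eq_zero_of_odd hn (by obtain ⟨j, rfl⟩ := hn; omega)]
    simpa using ValGe.zero (p := p) (e := 0)

lemma valGe_pow_mul_pow_sub_one (b : ℕ) :
    ValGe p b ((p : ℚ_[p]) ^ b * ((p : ℚ_[p]) ^ b - 1)) := by
  exact_mod_cast ValGe.intCast_iff.mpr (dvd_mul_right ((p : ℤ) ^ b) ((p : ℤ) ^ b - 1))

lemma valGe_twelve_mul_faulhaber_term_mul_sum_range_pow {a b r : ℕ} (ha : 1 ≤ a) (hb : 1 ≤ b)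
    (hr : 2 ≤ r) {B : ℚ_[p]} (hB : ValGe p (-1) B) (m : ℕ) :
    ValGe p (a + b)
      (12 * (B * m * ((p : ℚ_[p]) ^ a) ^ r / r * ∑ x ∈ range (p ^ b), (x : ℚ_[p]) ^ r)) := by
  have ha' : (1 : ℤ) ≤ a := by exact_mod_cast ha
  obtain rfl | hr3 := hr.eq_or_lt
  · -- `valGe_sum_range_pow` would lose a factor `p` here; use the closed form of `S_2` instead
    have hsq : 12 * (B * m * ((p : ℚ_[p]) ^ a) ^ 2 / (2 : ℕ) *
        ∑ x ∈ range (p ^ b), (x : ℚ_[p]) ^ 2) =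
        B * m * ((p : ℚ_[p]) ^ a) ^ 2 *
          ((p : ℚ_[p]) ^ b * ((p : ℚ_[p]) ^ b - 1) * (2 * (p : ℚ_[p]) ^ b - 1)) := by
      have h6 := six_mul_sum_range_natCast_sq (R := ℚ_[p]) (p ^ b)
      push_cast at h6 ⊢
      linear_combination B * m * ((p : ℚ_[p]) ^ a) ^ 2 * h6
    have h2b : ValGe p 0 (2 * (p : ℚ_[p]) ^ b - 1) := by
      exact_mod_cast ValGe.intCast (2 * (p : ℤ) ^ b - 1)
    rw [hsq]
    exact (((hB.mul (ValGe.natCast m)).mul ((ValGe.p_pow a).pow 2)).mul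
      ((valGe_pow_mul_pow_sub_one b).mul h2b)).mono (by push_cast; linarith)
  · have hv : (padicValNat p r : ℤ) + 3 ≤ r + padicValNat p 12 := by
      exact_mod_cast padicValNat_add_three_le hr3
    have h12 := ValGe.natCast_padicValNat (p := p) (r := 12) (by norm_num)
    rw [Nat.cast_ofNat] at h12
    have hr' : (3 : ℤ) ≤ r := by exact_mod_cast hr3
    refine (h12.mul ((valGe_faulhaber_term hB (ValGe.p_pow a) m (by omega)).mul
      (valGe_sum_range_pow (m := r) hb))).mono ?_
    nlinarith

theorem valGe_twelve_mul_sum_range_mul_sum_range_add_mul_pow {a b k : ℕ} (hk : k ≠ 0)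
    (ha : 1 ≤ a) (hb : 1 ≤ b) :
    ValGe p (a + b) (12 * ∑ j ∈ range (p ^ b), ∑ s ∈ range (p ^ a),
      (j : ℚ_[p]) * ((s : ℚ_[p]) + j * (p : ℚ_[p]) ^ a) ^ (2 * k - 1)) := by
  set n := 2 * k - 1
  have hn : Odd n := ⟨k - 1, by omega⟩
  have hdecomp := sum_range_mul_sum_range_add_mul_pow (R := ℚ_[p]) (p ^ a) (p ^ b) n
  rw [sum_range_sum_range_mul_pow_eq, sum_range_succ, Nat.choose_self, Nat.add_sub_cancel_left,
    ← pow_add, add_comm b a] at hdecomp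
  push_cast at hdecomp
  rw [hdecomp, mul_sub]
  refine ValGe.sub ?_ ?_
  · have hsplit : 12 * (((p : ℚ_[p]) ^ b - 1) * ∑ x ∈ range (p ^ (a + b)), (x : ℚ_[p]) ^ n) =
        ((p : ℚ_[p]) ^ b - 1) * (12 * (∑ x ∈ range (p ^ (a + b)), (x : ℚ_[p]) ^ n -
          p ^ (a + b) * bernoulli n) + p ^ (a + b) * (6 * (2 * bernoulli n))) := by ring
    have hbern : ValGe p 0 (6 * (2 * (bernoulli n : ℚ_[p]))) := by
      simpa using (ValGe.natCast 6).mul (valGe_two_mul_bernoulli_of_odd hn)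
    have hpb : ValGe p 0 ((p : ℚ_[p]) ^ b - 1) := by
      exact_mod_cast ValGe.intCast ((p : ℤ) ^ b - 1)
    rw [hsplit]
    exact (hpb.mul ((valGe_twelve_mul_sum_range_pow_sub (by omega)).add
      ((ValGe.p_pow (a + b)).mul hbern))).mono (by omega)
  · have hlast : 12 * ((bernoulli n : ℚ_[p]) * 1 * ((p : ℚ_[p]) ^ a) ^ 1 / 1 *
        ∑ x ∈ range (p ^ b), (x : ℚ_[p]) ^ 1) =
        2 * bernoulli n * (p : ℚ_[p]) ^ a * (3 * (p ^ b * (p ^ b - 1))) := by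
      have h2 := two_mul_sum_range_natCast (R := ℚ_[p]) (p ^ b)
      push_cast at h2
      simp only [pow_one]
      linear_combination 6 * (bernoulli n : ℚ_[p]) * (p : ℚ_[p]) ^ a * h2
    rw [mul_add, mul_sum, hlast]
    refine ValGe.add (ValGe.sum fun i hi => ?_) ?_
    · have hi := mem_range.mp hi
      exact valGe_twelve_mul_faulhaber_term_mul_sum_range_pow ha hb (by omega)
        (valGe_bernoulli i) _
    · exact (((valGe_two_mul_bernoulli_of_odd hn).mul (ValGe.p_pow a)).mul
        ((ValGe.natCast 3).mul (valGe_pow_mul_pow_sub_one b))).mono (by omega)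

end Padic

theorem vanish1 (p : ℕ) (hp : p.Prime) (a b k : ℕ) (hk : 1 ≤ k) :
    ((p : ℤ) ^ (a + b)) ∣
      ((bernoulli (2 * k) / (2 * k : ℚ)).den : ℤ) *
        ∑ j ∈ Finset.range (p ^ b), ∑ s ∈ Finset.range (p ^ a),
          (j : ℤ) * ((s : ℤ) + (j : ℤ) * (p : ℤ) ^ a) ^ (2 * k - 1) := by
  have : Fact p.Prime := ⟨hp⟩
  rcases Nat.eq_zero_or_pos b with rfl | hb
  · simp
  refine ValGe.intCast_iff.mp ?_
  push_cast
  rcases Nat.eq_zero_or_pos a with rfl | ha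
  · have hdiag (j : ℕ) : ∑ s ∈ range (p ^ 0),
        (j : ℚ_[p]) * ((s : ℚ_[p]) + j * (p : ℚ_[p]) ^ 0) ^ (2 * k - 1) = (j : ℚ_[p]) ^ (2 * k) := by
      rw [pow_zero, sum_range_one, Nat.cast_zero, zero_add, pow_zero, mul_one, ← pow_succ',
        Nat.sub_add_cancel (by omega)]
    simp only [hdiag, Nat.cast_zero, zero_add]
    exact valGe_den_mul_sum_range_pow (by omega) hb
  · obtain ⟨t, ht⟩ := twelve_dvd_den_bernoulli_div (k := k) (by omega)
    rw [ht, Nat.cast_mul, Nat.cast_ofNat, mul_comm _ (t : ℚ_[p]), mul_assoc]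
    exact ((ValGe.natCast t).mul
      (valGe_twelve_mul_sum_range_mul_sum_range_add_mul_pow (by omega) ha hb)).mono (by omega)
end

section
/- Let p be a prime, c an integer prime to p, a, b ≥ 0, and k ≥ 1. Then D'_{2k}·Σ_{j=0}^{p^b - 1} Σ_{s=0}^{p^a - 1} (s + j·p^a)^{2k-1}·⌊sc/p^a⌋ ≡ D'_{2k}·p^b·Σ_{s=0}^{p^a - 1} s^{2k-1}·⌊sc/p^a⌋ (mod p^{a+b}). -/
/-!
Write `S(N) = ∑_{t < N} t^n G(t)` for `G(t) = ⌊(t mod p^a) c / p^a⌋`, which has period `p^a`; the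
double sum is `S(p^{a+b})`. If `G` has period `m` and `q ∣ m`, then expanding
`(s + jm)^n ≡ s^n + n s^{n-1} jm (mod m^2)` gives
`S(mq) - q S(m) ≡ n m W ∑_{j<q} j = n m W q(q-1)/2 (mod mq)`, so `D (S(mq) - q S(m)) ≡ 0 (mod mq)`
for every even `D`. Telescoping over `m = p^a, p^{a+1}, …` yields the claim, because
`D'_{2k}` is even: by von Staudt–Clausen, `B_{2k} + 1/2` is 2-integral, hence `B_{2k}` is not.
-/

open Finset

theorem two_dvd_den_bernoulli {k : ℕ} (hk : k ≠ 0) : 2 ∣ (bernoulli (2 * k)).den := by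
  have : Fact (Nat.Prime 2) := ⟨Nat.prime_two⟩
  by_contra hB
  obtain ⟨z, hz⟩ := Bernoulli.vonStaudt_clausen k
  set P := (range (2 * k + 2)).filter fun q => q.Prime ∧ (q - 1) ∣ 2 * k
  have h2 : 2 ∈ P := by simp [P, Nat.pos_of_ne_zero hk, Nat.prime_two]
  rw [← add_sum_erase P _ h2] at hz
  have hrest : ‖((∑ q ∈ P.erase 2, (1 : ℚ) / q : ℚ) : ℚ_[2])‖ ≤ 1 := by
    push_cast
    refine IsUltrametricDist.norm_sum_le_of_forall_le_of_nonneg zero_le_one fun q hq => ?_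
    obtain ⟨hq2, hqP⟩ := mem_erase.mp hq
    have hq : q.Prime := (mem_filter.mp hqP).2.1
    have := Padic.norm_rat_le_one (p := 2) (q := 1 / q) (by
      rw [one_div, Rat.inv_natCast_den, if_neg hq.ne_zero]
      exact fun h => hq2 ((Nat.prime_dvd_prime_iff_eq Nat.prime_two hq).mp h).symm)
    simpa using this
  have hhalf : ((1 / 2 : ℚ) : ℚ_[2]) =
      z + -(bernoulli (2 * k) : ℚ_[2]) + -((∑ q ∈ P.erase 2, (1 : ℚ) / q : ℚ) : ℚ_[2]) := by
    rw [← Rat.cast_intCast, hz]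
    push_cast
    ring
  have hle : ‖((1 / 2 : ℚ) : ℚ_[2])‖ ≤ 1 := by
    rw [hhalf]
    refine (Padic.nonarchimedean _ _).trans (max_le ((Padic.nonarchimedean _ _).trans
      (max_le (Padic.norm_int_le_one z) ?_)) ?_)
    · rw [norm_neg]
      exact Padic.norm_rat_le_one hB
    · rwa [norm_neg]
  have hnorm : ‖((1 / 2 : ℚ) : ℚ_[2])‖ = 2 := by
    simpa using congrArg (·⁻¹) (Padic.norm_p (p := 2))
  rw [hnorm] at hle
  norm_num at hle

theorem two_dvd_den_bernoulli_div {k : ℕ} (hk : k ≠ 0) :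
    2 ∣ (bernoulli (2 * k) / (2 * k : ℚ)).den := by
  refine (two_dvd_den_bernoulli hk).trans ?_
  have hk' : (2 * k : ℚ) ≠ 0 := by positivity
  calc (bernoulli (2 * k)).den
      = (bernoulli (2 * k) / (2 * k : ℚ) * ((2 * k : ℤ) : ℚ)).den := by
        push_cast
        rw [div_mul_cancel₀ _ hk']
    _ ∣ (bernoulli (2 * k) / (2 * k : ℚ)).den * ((2 * k : ℤ) : ℚ).den := Rat.mul_den_dvd _ _
    _ = _ := by rw [Rat.den_intCast, mul_one]

theorem Finset.sum_range_mul_eq_sum_sum {M : Type*} [AddCommMonoid M] (f : ℕ → M) (m N : ℕ) :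
    ∑ t ∈ range (m * N), f t = ∑ j ∈ range N, ∑ s ∈ range m, f (s + j * m) := by
  induction N with
  | zero => simp
  | succ N ih =>
    rw [Nat.mul_succ, sum_range_add, ih, sum_range_succ]
    simp only [add_comm, mul_comm]

theorem dvd_mul_sum_range_id {D : ℤ} (hD : 2 ∣ D) (q : ℕ) :
    (q : ℤ) ∣ D * ∑ j ∈ range q, (j : ℤ) := by
  obtain ⟨C, rfl⟩ := hD
  have h : q ∣ 2 * ∑ j ∈ range q, j := ⟨q - 1, by rw [mul_comm, sum_range_id_mul_two]⟩
  have h' := Int.natCast_dvd_natCast.mpr h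
  push_cast at h'
  rw [mul_comm 2, mul_assoc]
  exact dvd_mul_of_dvd_right h' C

def weightedPowerSum (n : ℕ) (G : ℕ → ℤ) (N : ℕ) : ℤ := ∑ t ∈ range N, (t : ℤ) ^ n * G t

section weightedPowerSum

variable {n : ℕ} {G : ℕ → ℤ} {m : ℕ}

theorem weightedPowerSum_mul_eq (hG : Function.Periodic G m) (q : ℕ) :
    weightedPowerSum n G (m * q) = ∑ j ∈ range q, ∑ s ∈ range m, ((s : ℤ) + j * m) ^ n * G s := by
  rw [weightedPowerSum, sum_range_mul_eq_sum_sum]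
  refine sum_congr rfl fun j _ => sum_congr rfl fun s _ => ?_
  have hper := hG.nat_mul j s
  rw [Nat.cast_id] at hper
  push_cast
  rw [hper]

theorem mul_dvd_weightedPowerSum_mul_sub {D : ℤ} (hD : 2 ∣ D) {q : ℕ} (hqm : q ∣ m)
    (hG : Function.Periodic G m) :
    (m * q : ℤ) ∣ D * (weightedPowerSum n G (m * q) - q * weightedPowerSum n G m) := by
  set W := ∑ s ∈ range m, (s : ℤ) ^ (n - 1) * G s
  have hsplit : D * (weightedPowerSum n G (m * q) - q * weightedPowerSum n G m) =
      ∑ j ∈ range q, ∑ s ∈ range m,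
        D * (((s : ℤ) + j * m) ^ n - s ^ (n - 1) * (j * m) * n - s ^ n) * G s +
      m * (n * W * (D * ∑ j ∈ range q, (j : ℤ))) := by
    have hq : (q : ℤ) * weightedPowerSum n G m = ∑ _j ∈ range q, weightedPowerSum n G m := by
      simp
    rw [hq, weightedPowerSum_mul_eq hG, weightedPowerSum]
    simp only [W, mul_sum, sum_mul, ← sum_sub_distrib, ← sum_add_distrib]
    exact sum_congr rfl fun j _ => sum_congr rfl fun s _ => by ring
  rw [hsplit]
  refine dvd_add (dvd_sum fun j _ => dvd_sum fun s _ => ?_) ?_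
  · have hsq : (m * q : ℤ) ∣ ((j : ℤ) * m) ^ 2 := by
      rw [show ((j : ℤ) * m) ^ 2 = j ^ 2 * (m * m) by ring]
      exact (mul_dvd_mul_left _ (Int.natCast_dvd_natCast.mpr hqm)).mul_left _
    exact ((hsq.trans (sq_dvd_add_pow_sub_sub _ _ n)).mul_left D).mul_right _
  · exact mul_dvd_mul_left _ ((dvd_mul_sum_range_id hD q).mul_left _)

theorem mul_pow_dvd_weightedPowerSum_mul_pow_sub {D : ℤ} (hD : 2 ∣ D) {q : ℕ} (hqm : q ∣ m)
    (hG : Function.Periodic G m) (b : ℕ) :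
    (m * q ^ b : ℤ) ∣
      D * (weightedPowerSum n G (m * q ^ b) - q ^ b * weightedPowerSum n G m) := by
  induction b with
  | zero => simp
  | succ b ih =>
    have hG' : Function.Periodic G (m * q ^ b) := by
      simpa [Nat.cast_id, mul_comm] using hG.nat_mul (q ^ b)
    have step := mul_dvd_weightedPowerSum_mul_sub (n := n) hD (hqm.mul_right (q ^ b)) hG'
    have htele : D * (weightedPowerSum n G (m * q ^ (b + 1)) - q ^ (b + 1) * weightedPowerSum n G m) =
        D * (weightedPowerSum n G (m * q ^ b * q) - q * weightedPowerSum n G (m * q ^ b)) +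
        q * (D * (weightedPowerSum n G (m * q ^ b) - q ^ b * weightedPowerSum n G m)) := by
      rw [pow_succ, ← mul_assoc]
      ring
    rw [htele]
    refine dvd_add ?_ ?_
    · push_cast at step
      rwa [pow_succ, ← mul_assoc]
    · simpa only [pow_succ, mul_comm, mul_left_comm] using mul_dvd_mul_left (q : ℤ) ih

end weightedPowerSum

theorem dvd_mul_sum_sum_add_mul_pow_sub {D : ℤ} (hD : 2 ∣ D) {m q : ℕ} (hqm : q ∣ m)
    (g : ℕ → ℤ) (n b : ℕ) :
    (m * q ^ b : ℤ) ∣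
      D * ∑ j ∈ range (q ^ b), ∑ s ∈ range m, ((s : ℤ) + j * m) ^ n * g s
        - D * q ^ b * ∑ s ∈ range m, (s : ℤ) ^ n * g s := by
  have hG : Function.Periodic (fun t => g (t % m)) m := fun t => by simp
  have hsum : ∀ F : ℕ → ℤ, ∑ s ∈ range m, F s * g (s % m) = ∑ s ∈ range m, F s * g s :=
    fun F => sum_congr rfl fun s hs => by rw [Nat.mod_eq_of_lt (mem_range.mp hs)]
  have h := mul_pow_dvd_weightedPowerSum_mul_pow_sub (n := n) hD hqm hG b
  rw [weightedPowerSum_mul_eq hG, weightedPowerSum, mul_sub, ← mul_assoc] at h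
  simpa only [hsum] using h

theorem vanish2_general (p : ℕ) (c : ℤ)
    (a b k : ℕ) (hk : 1 ≤ k) :
    ((p : ℤ) ^ (a + b)) ∣
      (((bernoulli (2 * k) / (2 * k : ℚ)).den : ℤ) *
        ∑ j ∈ Finset.range (p ^ b), ∑ s ∈ Finset.range (p ^ a),
          ((s : ℤ) + (j : ℤ) * (p : ℤ) ^ a) ^ (2 * k - 1) * ⌊(s : ℚ) * (c : ℚ) / (p : ℚ) ^ a⌋
       - ((bernoulli (2 * k) / (2 * k : ℚ)).den : ℤ) * (p : ℤ) ^ b *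
        ∑ s ∈ Finset.range (p ^ a),
          (s : ℤ) ^ (2 * k - 1) * ⌊(s : ℚ) * (c : ℚ) / (p : ℚ) ^ a⌋) := by
  rcases Nat.eq_zero_or_pos a with rfl | ha
  · simp
  have hD : (2 : ℤ) ∣ ((bernoulli (2 * k) / (2 * k : ℚ)).den : ℤ) := by
    exact_mod_cast two_dvd_den_bernoulli_div (by omega)
  have h := dvd_mul_sum_sum_add_mul_pow_sub hD (dvd_pow_self p ha.ne')
    (fun s => ⌊(s : ℚ) * (c : ℚ) / (p : ℚ) ^ a⌋) (2 * k - 1) b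
  push_cast at h
  rwa [pow_add]

theorem vanish2 (p : ℕ) (hp : p.Prime) (c : ℤ) (hc : IsCoprime c (p : ℤ))
    (a b k : ℕ) (hk : 1 ≤ k) :
    ((p : ℤ) ^ (a + b)) ∣
      (((bernoulli (2 * k) / (2 * k : ℚ)).den : ℤ) *
        ∑ j ∈ Finset.range (p ^ b), ∑ s ∈ Finset.range (p ^ a),
          ((s : ℤ) + (j : ℤ) * (p : ℤ) ^ a) ^ (2 * k - 1) * ⌊(s : ℚ) * (c : ℚ) / (p : ℚ) ^ a⌋
       - ((bernoulli (2 * k) / (2 * k : ℚ)).den : ℤ) * (p : ℤ) ^ b *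
        ∑ s ∈ Finset.range (p ^ a),
          (s : ℤ) ^ (2 * k - 1) * ⌊(s : ℚ) * (c : ℚ) / (p : ℚ) ^ a⌋) :=
  vanish2_general p c a b k hk
end

section
/- Let p be a prime, a, b positive integers, and k ≥ 1 with 2k - 1 ≥ l. For every even l ≥ 2, D_{2k}·p^{a·l}·S_{2k-1-l}(p^a)·S_{l+1}(p^b) ≡ 0 (mod p^{a+b}), where S_r(N) = Σ_{s=1}^{N-1} s^r and D_{2k} is the denominator of B_{2k}. -/
/-!
Only the factor `p ^ (a * l) * S_{l+1}(p ^ b)` matters. Since `l + 1` is odd, `x ↦ -x` pairs the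
terms of `∑_{x ∈ ℤ/N} x ^ (l + 1)`, so `N ∣ 2 * S_{l+1}(N)`. For `N = p ^ b` this gives
`p ^ b ∣ p * S_{l+1}(p ^ b)` (for odd `p` the `2` is a unit mod `p ^ b`), and `a * l ≥ a + 1`
supplies the remaining `p ^ a` together with that extra factor `p`.
-/

open Finset

theorem two_mul_sum_pow_eq_zero_of_odd (R : Type*) [Ring R] [Fintype R] {r : ℕ} (hr : Odd r) :
    2 * ∑ x : R, x ^ r = 0 := by
  have hneg : ∑ x : R, x ^ r = -∑ x : R, x ^ r :=
    calc ∑ x : R, x ^ r = ∑ x : R, (-x) ^ r := (Equiv.sum_comp (Equiv.neg R) (· ^ r)).symm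
      _ = -∑ x : R, x ^ r := by simp only [hr.neg_pow, sum_neg_distrib]
  rw [two_mul]
  nth_rewrite 2 [hneg]
  exact add_neg_cancel _

theorem ZMod.sum_range_natCast (N : ℕ) [NeZero N] {M : Type*} [AddCommMonoid M]
    (f : ZMod N → M) : ∑ s ∈ range N, f s = ∑ x : ZMod N, f x :=
  sum_nbij' (fun s => (s : ZMod N)) ZMod.val (fun _ _ => mem_univ _)
    (fun x _ => mem_range.mpr x.val_lt)
    (fun _ hs => ZMod.val_cast_of_lt (mem_range.mp hs))
    (fun x _ => ZMod.natCast_zmod_val x) (fun _ _ => rfl)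

theorem Int.natCast_dvd_two_mul_sum_range_pow_of_odd (N : ℕ) {r : ℕ} (hr : Odd r) :
    (N : ℤ) ∣ 2 * ∑ s ∈ Finset.range N, (s : ℤ) ^ r := by
  rcases N.eq_zero_or_pos with rfl | hN
  · simp
  have : NeZero N := ⟨hN.ne'⟩
  rw [← ZMod.intCast_zmod_eq_zero_iff_dvd]
  push_cast
  rw [ZMod.sum_range_natCast N (· ^ r)]
  exact two_mul_sum_pow_eq_zero_of_odd (ZMod N) hr

theorem Nat.Prime.pow_dvd_mul_of_pow_dvd_two_mul {p : ℕ} (hp : p.Prime) {b : ℕ} {x : ℤ}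
    (h : (p : ℤ) ^ b ∣ 2 * x) : (p : ℤ) ^ b ∣ p * x := by
  rcases eq_or_ne p 2 with rfl | hp2
  · exact_mod_cast h
  have hcop : IsCoprime ((p : ℤ) ^ b) 2 :=
    (Nat.isCoprime_iff_coprime.mpr ((Nat.coprime_primes hp Nat.prime_two).mpr hp2)).pow_left
  exact (hcop.dvd_of_dvd_mul_left h).mul_left _

theorem even_l_term_vanish_general (p : ℕ) (hp : p.Prime) (a b : ℕ) (ha : 1 ≤ a)
    (k l : ℕ) (hl2 : 2 ≤ l) (hl : Even l) :
    (p : ℤ) ^ (a + b) ∣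
      ((bernoulli (2 * k)).den : ℤ) * (p : ℤ) ^ (a * l) *
        (∑ s ∈ Finset.range (p ^ a), (s : ℤ) ^ (2 * k - 1 - l)) *
        (∑ s ∈ Finset.range (p ^ b), (s : ℤ) ^ (l + 1)) := by
  set S := ∑ s ∈ range (p ^ b), (s : ℤ) ^ (l + 1)
  have hS : (p : ℤ) ^ b ∣ p * S := by
    apply hp.pow_dvd_mul_of_pow_dvd_two_mul
    simpa only [Nat.cast_pow] using
      Int.natCast_dvd_two_mul_sum_range_pow_of_odd (p ^ b) hl.add_one
  have hal : a + 1 ≤ a * l := by nlinarith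
  obtain ⟨c, hc⟩ : ∃ c, a * l = c + a + 1 := ⟨a * l - a - 1, by omega⟩
  have hmain : (p : ℤ) ^ (a + b) ∣ p ^ (a * l) * S := by
    rw [hc, show (p : ℤ) ^ (c + a + 1) * S = p ^ c * (p ^ a * (p * S)) by ring, pow_add]
    exact (mul_dvd_mul_left _ hS).mul_left _
  rw [mul_right_comm _ _ (∑ s ∈ range (p ^ a), _), mul_assoc]
  exact hmain.mul_left _

theorem even_l_term_vanish (p : ℕ) (hp : p.Prime) (a b : ℕ) (ha : 1 ≤ a) (hb : 1 ≤ b)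
    (k l : ℕ) (hk : 1 ≤ k) (hl2 : 2 ≤ l) (hle : l ≤ 2 * k - 1) (hl : Even l) :
    (p : ℤ) ^ (a + b) ∣
      ((bernoulli (2 * k)).den : ℤ) * (p : ℤ) ^ (a * l) *
        (∑ s ∈ Finset.range (p ^ a), (s : ℤ) ^ (2 * k - 1 - l)) *
        (∑ s ∈ Finset.range (p ^ b), (s : ℤ) ^ (l + 1)) :=
  even_l_term_vanish_general p hp a b ha k l hl2 hl
end
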